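/- arXiv:1802.02770 — 2 statements merged into one kernel-verified Lean document; each statement's English description precedes it below -/
import Mathlib

section
/- For all real numbers s and t with t > 0 and s > 1 + t, the series ∑_{n≥1} R(n)^t · ln n / n^s converges and equals S(s,t) · ∑_{n≥1} R(n)^t / n^s. -/
/-!
Write `f n = R(n)^t / n^s` (`radTerm s t n`) and `log n = ∑_p ν_p(n) log p`. Every term is
nonnegative, so the double sum over `n` and `p` may be swapped, and it suffices to show
`∑_n ν_p(n) f(n) = c_p ∑_n f(n)` with `c_p = p^s/(p^s - 1) · p^t/(p^s - 1 + p^t)`.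
Writing `n = p^a m` with `p ∤ m` and using that `f` is multiplicative, both `∑_n f(n)` and
`∑_n ν_p(n) f(n)` factor as a local sum over `a` times `∑_{p ∤ m} f(m)`. The local sums are
geometric series in `p^{-s}`, and their ratio is `c_p`.
-/

open scoped BigOperators

/-- The radical of a natural number: the product of its distinct prime factors. -/
def rad (n : ℕ) : ℕ := ∏ p ∈ n.primeFactors, p

/-- `S s t = ∑_p (p^s/(p^s − 1)) · (p^t/(p^s − 1 + p^t)) · ln p` over all primes `p`. -/
noncomputable def S (s t : ℝ) : ℝ :=
  ∑' p : Nat.Primes, (((p : ℕ) : ℝ) ^ s / (((p : ℕ) : ℝ) ^ s - 1)) *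
    (((p : ℕ) : ℝ) ^ t / (((p : ℕ) : ℝ) ^ s - 1 + ((p : ℕ) : ℝ) ^ t)) *
    Real.log ((p : ℕ) : ℝ)

/-- `T s t = ∑_p (p^t/(p^s − 1 + p^t)) · ln p` over all primes `p`. -/
noncomputable def T (s t : ℝ) : ℝ :=
  ∑' p : Nat.Primes, (((p : ℕ) : ℝ) ^ t / (((p : ℕ) : ℝ) ^ s - 1 + ((p : ℕ) : ℝ) ^ t)) *
    Real.log ((p : ℕ) : ℝ)

open Real

lemma rad_le_self {n : ℕ} (hn : n ≠ 0) : rad n ≤ n :=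
  Nat.le_of_dvd (Nat.pos_of_ne_zero hn) (Nat.prod_primeFactors_dvd n)

lemma rad_mul_of_coprime {m n : ℕ} (h : m.Coprime n) : rad (m * n) = rad m * rad n := by
  rw [rad, h.primeFactors_mul, Finset.prod_union h.disjoint_primeFactors, rad, rad]

lemma rad_prime_pow {p a : ℕ} (hp : p.Prime) (ha : a ≠ 0) : rad (p ^ a) = p := by
  rw [rad, Nat.primeFactors_prime_pow ha hp, Finset.prod_singleton]

lemma summable_rpow_mul_log {r : ℝ} (hr : r < -1) :
    Summable fun n : ℕ => (n : ℝ) ^ r * log n := by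
  set ε := (-1 - r) / 2 with hε_def
  have hε : 0 < ε := by linarith
  refine Summable.of_nonneg_of_le (fun n => mul_nonneg (by positivity) (log_natCast_nonneg n))
    (fun n => ?_) ((summable_nat_rpow.mpr (show r + ε < -1 by linarith)).div_const ε)
  rcases Nat.eq_zero_or_pos n with rfl | hn
  · rw [Nat.cast_zero, log_zero, mul_zero]; positivity
  have hn' : (0 : ℝ) < n := by exact_mod_cast hn
  calc (n : ℝ) ^ r * log n ≤ (n : ℝ) ^ r * ((n : ℝ) ^ ε / ε) :=
        mul_le_mul_of_nonneg_left (log_le_rpow_div hn'.le hε) (by positivity)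
    _ = (n : ℝ) ^ (r + ε) / ε := by rw [rpow_add hn', mul_div_assoc]

lemma Nat.Prime.one_lt_cast_rpow {p : ℕ} (hp : p.Prime) {s : ℝ} (hs : 0 < s) :
    1 < (p : ℝ) ^ s :=
  one_lt_rpow (by exact_mod_cast hp.one_lt) hs

lemma Nat.factorization_pow_mul_of_not_dvd {p a m : ℕ} (hp : p.Prime) (hm : ¬ p ∣ m) :
    (p ^ a * m).factorization p = a := by
  have hm0 : m ≠ 0 := by rintro rfl; exact hm (dvd_zero p)
  rw [Nat.factorization_mul (pow_ne_zero _ hp.ne_zero) hm0, Finsupp.add_apply,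
    hp.factorization_pow, Finsupp.single_eq_same, Nat.factorization_eq_zero_of_not_dvd hm,
    add_zero]

def powMulNotDvdEquiv {p : ℕ} (hp : p.Prime) : ℕ × {m : ℕ+ // ¬ p ∣ (m : ℕ)} ≃ ℕ+ where
  toFun q := ⟨p ^ q.1 * q.2.1, by have := hp.pos; have := q.2.1.pos; positivity⟩
  invFun n := ((n : ℕ).factorization p,
    ⟨⟨ordCompl[p] n, Nat.ordCompl_pos p n.ne_zero⟩, Nat.not_dvd_ordCompl hp n.ne_zero⟩)
  left_inv := by
    rintro ⟨a, m, hm⟩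
    ext
    · exact Nat.factorization_pow_mul_of_not_dvd hp hm
    · refine PNat.coe_injective ?_
      change ordCompl[p] (p ^ a * (m : ℕ)) = m
      exact Nat.ordCompl_pow_mul_of_not_dvd a hp hm
  right_inv n := PNat.coe_injective (Nat.ordProj_mul_ordCompl_eq_self n p)

lemma coe_powMulNotDvdEquiv {p : ℕ} (hp : p.Prime) (q : ℕ × {m : ℕ+ // ¬ p ∣ (m : ℕ)}) :
    ((powMulNotDvdEquiv hp q : ℕ+) : ℕ) = p ^ q.1 * q.2.1 := rfl

theorem hasSum_pnat_comp_factorization_mul {p : ℕ} (hp : p.Prime) {f h : ℕ → ℝ}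
    (hf0 : ∀ n, 0 ≤ f n) (hf : ∀ m n, m.Coprime n → f (m * n) = f m * f n) (hh : ∀ a, 0 ≤ h a)
    {A B : ℝ} (hA : HasSum (fun a => h a * f (p ^ a)) A)
    (hB : HasSum (fun m : {m : ℕ+ // ¬ p ∣ (m : ℕ)} => f m) B) :
    HasSum (fun n : ℕ+ => h ((n : ℕ).factorization p) * f n) (A * B) := by
  rw [← (powMulNotDvdEquiv hp).hasSum_iff]
  have hsplit : ∀ q : ℕ × {m : ℕ+ // ¬ p ∣ (m : ℕ)},
      h ((powMulNotDvdEquiv hp q : ℕ).factorization p) * f (powMulNotDvdEquiv hp q)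
        = h q.1 * f (p ^ q.1) * f q.2.1 := by
    rintro ⟨a, m, hm⟩
    rw [coe_powMulNotDvdEquiv, Nat.factorization_pow_mul_of_not_dvd hp hm,
      hf _ _ ((hp.coprime_iff_not_dvd.mpr hm).pow_left a), mul_assoc]
  simp only [Function.comp_def, hsplit]
  exact hA.mul hB (hA.summable.mul_of_nonneg hB.summable
    (fun a => mul_nonneg (hh a) (hf0 _)) (fun m => hf0 _))

lemma hasSum_factorization_mul_log (n : ℕ) :
    HasSum (fun p : Nat.Primes => (n.factorization p : ℝ) * log p) (log n) := by
  rw [log_nat_eq_sum_factorization, Finsupp.sum]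
  refine (hasSum_subtype_iff_of_support_subset (s := {p : ℕ | p.Prime}) fun p hp => ?_).mpr
    (hasSum_sum_of_ne_finset_zero fun p hp => ?_)
  · by_contra hnp
    exact hp (by simp [Nat.factorization_eq_zero_of_not_prime n hnp])
  · simp [Finsupp.notMem_support_iff.mp hp]

theorem tsum_mul_log_eq_tsum_primes {g : ℕ+ → ℝ} (hg : ∀ n, 0 ≤ g n)
    (hlog : Summable fun n => g n * log n) :
    ∑' n, g n * log n =
      ∑' p : Nat.Primes, log p * ∑' n : ℕ+, ((n : ℕ).factorization p : ℝ) * g n := by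
  set F : ℕ+ → Nat.Primes → ℝ := fun n p => log p * (((n : ℕ).factorization p : ℝ) * g n)
  have hfibre (n : ℕ+) : HasSum (F n) (g n * log n) :=
    ((hasSum_factorization_mul_log n).mul_left (g n)).congr_fun fun p => by ring
  have hF : Summable (Function.uncurry F) := by
    refine (summable_prod_of_nonneg fun q => ?_).mpr
      ⟨fun n => (hfibre n).summable, hlog.congr fun n => (hfibre n).tsum_eq.symm⟩
    exact mul_nonneg (log_natCast_nonneg _) (mul_nonneg (Nat.cast_nonneg _) (hg _))
  calc ∑' n, g n * log n = ∑' n, ∑' p, F n p := tsum_congr fun n => (hfibre n).tsum_eq.symm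
    _ = ∑' p, ∑' n, F n p := hF.tsum_comm.symm
    _ = _ := tsum_congr fun p => tsum_mul_left

noncomputable def radTerm (s t : ℝ) (n : ℕ) : ℝ := (rad n : ℝ) ^ t / (n : ℝ) ^ s

namespace radTerm

variable {s t : ℝ} {p : ℕ}

lemma nonneg (s t : ℝ) (n : ℕ) : 0 ≤ radTerm s t n := by
  unfold radTerm; positivity

lemma mul_of_coprime {m n : ℕ} (h : m.Coprime n) :
    radTerm s t (m * n) = radTerm s t m * radTerm s t n := by
  simp only [radTerm, rad_mul_of_coprime h, Nat.cast_mul]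
  rw [mul_rpow (by positivity) (by positivity), mul_rpow (by positivity) (by positivity),
    mul_div_mul_comm]

lemma prime_pow (hp : p.Prime) {a : ℕ} (ha : a ≠ 0) :
    radTerm s t (p ^ a) = (p : ℝ) ^ t * ((p : ℝ) ^ s)⁻¹ ^ a := by
  rw [radTerm, rad_prime_pow hp ha, Nat.cast_pow, ← rpow_pow_comm (Nat.cast_nonneg p),
    div_eq_mul_inv, inv_pow]

lemma le_rpow (ht : 0 ≤ t) {n : ℕ} (hn : n ≠ 0) : radTerm s t n ≤ (n : ℝ) ^ (t - s) := by
  have hn' : (0 : ℝ) < n := by positivity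
  rw [radTerm, rpow_sub hn']
  gcongr
  exact_mod_cast rad_le_self hn

lemma summable (ht : 0 ≤ t) (hs : 1 + t < s) : Summable fun n : ℕ+ => radTerm s t n :=
  ((summable_nat_rpow.mpr (by linarith : t - s < -1)).comp_injective
    PNat.coe_injective).of_nonneg_of_le
    (fun n => nonneg s t n) (fun n => le_rpow ht n.ne_zero)

lemma summable_mul_log (ht : 0 ≤ t) (hs : 1 + t < s) :
    Summable fun n : ℕ+ => radTerm s t n * log n :=
  ((summable_rpow_mul_log (by linarith : t - s < -1)).comp_injective
    PNat.coe_injective).of_nonneg_of_le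
    (fun n => mul_nonneg (nonneg s t n) (log_natCast_nonneg n))
    (fun n => mul_le_mul_of_nonneg_right (le_rpow ht n.ne_zero) (log_natCast_nonneg n))

lemma hasSum_prime_pow (hp : p.Prime) (hs : 0 < s) :
    HasSum (fun a => radTerm s t (p ^ a))
      (((p : ℝ) ^ s - 1 + (p : ℝ) ^ t) / ((p : ℝ) ^ s - 1)) := by
  have hy := hp.one_lt_cast_rpow hs
  have hgeom := hasSum_geometric_of_lt_one (r := ((p : ℝ) ^ s)⁻¹) (by positivity)
    (inv_lt_one_of_one_lt₀ hy)
  have hterm (a : ℕ) : radTerm s t (p ^ a)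
      = (p : ℝ) ^ t * ((p : ℝ) ^ s)⁻¹ ^ a + if a = 0 then 1 - (p : ℝ) ^ t else 0 := by
    rcases a with _ | a
    · simp [radTerm, rad]
    · simp [prime_pow hp]
  have hval : ((p : ℝ) ^ s - 1 + (p : ℝ) ^ t) / ((p : ℝ) ^ s - 1)
      = (p : ℝ) ^ t * (1 - ((p : ℝ) ^ s)⁻¹)⁻¹ + (1 - (p : ℝ) ^ t) := by
    field_simp [(by linarith : (p : ℝ) ^ s - 1 ≠ 0)]
    ring
  simp only [hterm, hval]
  exact (hgeom.mul_left _).add (hasSum_ite_eq 0 _)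

lemma hasSum_mul_prime_pow (hp : p.Prime) (hs : 0 < s) :
    HasSum (fun a : ℕ => a * radTerm s t (p ^ a))
      ((p : ℝ) ^ t * (p : ℝ) ^ s / ((p : ℝ) ^ s - 1) ^ 2) := by
  have hy := hp.one_lt_cast_rpow hs
  have hgeom := hasSum_coe_mul_geometric_of_norm_lt_one (r := ((p : ℝ) ^ s)⁻¹)
    (by rw [norm_inv, norm_of_nonneg (by positivity)]; exact inv_lt_one_of_one_lt₀ hy)
  have hterm (a : ℕ) : a * radTerm s t (p ^ a) = (p : ℝ) ^ t * (a * ((p : ℝ) ^ s)⁻¹ ^ a) := by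
    rcases a with _ | a
    · simp
    · rw [prime_pow hp a.succ_ne_zero, pow_succ]; ring
  have hval : (p : ℝ) ^ t * (p : ℝ) ^ s / ((p : ℝ) ^ s - 1) ^ 2
      = (p : ℝ) ^ t * (((p : ℝ) ^ s)⁻¹ / (1 - ((p : ℝ) ^ s)⁻¹) ^ 2) := by
    field_simp [(by linarith : (p : ℝ) ^ s - 1 ≠ 0)]
  simp only [hterm, hval]
  exact hgeom.mul_left _

theorem hasSum_factorization_mul (ht : 0 ≤ t) (hs : 1 + t < s) (hp : p.Prime) :
    HasSum (fun n : ℕ+ => ((n : ℕ).factorization p : ℝ) * radTerm s t n)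
      ((p : ℝ) ^ s / ((p : ℝ) ^ s - 1) * ((p : ℝ) ^ t / ((p : ℝ) ^ s - 1 + (p : ℝ) ^ t)) *
        ∑' n : ℕ+, radTerm s t n) := by
  have hs0 : 0 < s := by linarith
  have hB := ((summable ht hs).subtype {m : ℕ+ | ¬ p ∣ (m : ℕ)}).hasSum
  have hmul (m n : ℕ) (h : m.Coprime n) : radTerm s t (m * n) = radTerm s t m * radTerm s t n :=
    mul_of_coprime h
  have hsum := hasSum_pnat_comp_factorization_mul hp (nonneg s t) hmul
    (fun _ => zero_le_one) ((hasSum_prime_pow hp hs0).congr_fun fun a => one_mul _) hB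
  have hsum_factorization := hasSum_pnat_comp_factorization_mul hp (nonneg s t) hmul
    (fun a => Nat.cast_nonneg a) (hasSum_mul_prime_pow hp hs0) hB
  -- both sums carry the same factor `∑_{p ∤ m} radTerm s t m`, which cancels in the ratio
  simp only [one_mul] at hsum
  rw [hsum.tsum_eq]
  convert hsum_factorization using 1
  have hy := hp.one_lt_cast_rpow hs0
  have : 0 < (p : ℝ) ^ t := by have := hp.pos; positivity
  field_simp [(by linarith : (p : ℝ) ^ s - 1 ≠ 0),
    (by linarith : (p : ℝ) ^ s - 1 + (p : ℝ) ^ t ≠ 0)]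

end radTerm

theorem stmt_6 (s t : ℝ) (ht : 0 < t) (hs : 1 + t < s) :
    Summable (fun n : ℕ+ => (rad n : ℝ) ^ t * Real.log (n : ℝ) / (n : ℝ) ^ s) ∧
    (∑' n : ℕ+, (rad n : ℝ) ^ t * Real.log (n : ℝ) / (n : ℝ) ^ s) =
      S s t * ∑' n : ℕ+, (rad n : ℝ) ^ t / (n : ℝ) ^ s := by
  have hterm (n : ℕ+) : (rad n : ℝ) ^ t * log n / (n : ℝ) ^ s = radTerm s t n * log n :=
    mul_div_right_comm _ _ _
  simp only [hterm]
  refine ⟨radTerm.summable_mul_log ht.le hs, ?_⟩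
  rw [tsum_mul_log_eq_tsum_primes (radTerm.nonneg s t ·) (radTerm.summable_mul_log ht.le hs),
    S, ← tsum_mul_right]
  refine tsum_congr fun p => ?_
  rw [(radTerm.hasSum_factorization_mul ht.le hs p.prop).tsum_eq]
  simp only [radTerm]
  ring
end

section
/- (Theorem 2) Let s and t be real numbers with t > 0 and s > 1 + t. If a and b are coprime positive integers and c = a + b satisfies T(s,t) · ln c < S(s,t) · ln R(c) (that is, c < R(c)^{S(s,t)/T(s,t)}), then a + b < R(a·b·c)^2. -/
open scoped BigOperators

/-!
For `s ≥ 1` every prime satisfies `p^s ≥ 2`, so the extra factor `p^s/(p^s − 1)` of the summands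
of `S` lies in `[1, 2]`. Hence `0 ≤ T ≤ S ≤ 2T` (also when the series diverge, as then both sums are
`0`), and the hypothesis `T · ln c < S · ln R(c)` forces `ln c < 2 ln R(c)`, i.e. `c < R(c)^2`.
Finally `R(c) ≤ R(abc)` since `c ∣ abc ≠ 0`.
-/

open Real

lemma tsum_le_mul_tsum_of_le_of_le {ι : Type*} {f g : ι → ℝ} {c : ℝ} (hf : ∀ i, 0 ≤ f i)
    (hfg : ∀ i, f i ≤ g i) (hgc : ∀ i, g i ≤ c * f i) : ∑' i, g i ≤ c * ∑' i, f i := by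
  by_cases hsum : Summable f
  · have hcf : Summable fun i => c * f i := hsum.mul_left c
    rw [← tsum_mul_left]
    exact (hcf.of_nonneg_of_le (fun i => (hf i).trans (hfg i)) hgc).tsum_le_tsum hgc hcf
  · have hg : ¬Summable g := fun hg => hsum (hg.of_nonneg_of_le hf hfg)
    simp [tsum_eq_zero_of_not_summable hsum, tsum_eq_zero_of_not_summable hg]

lemma one_le_div_sub_one {u : ℝ} (hu : 1 < u) : 1 ≤ u / (u - 1) := by
  rw [le_div_iff₀ (by linarith)]
  linarith

lemma div_sub_one_le_two {u : ℝ} (hu : 2 ≤ u) : u / (u - 1) ≤ 2 := by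
  rw [div_le_iff₀ (by linarith)]
  linarith

noncomputable def logWeight (s t x : ℝ) : ℝ := x ^ t / (x ^ s - 1 + x ^ t) * log x

lemma T_eq_tsum_logWeight (s t : ℝ) : T s t = ∑' p : Nat.Primes, logWeight s t (p : ℕ) := rfl

lemma S_eq_tsum_mul_logWeight (s t : ℝ) :
    S s t = ∑' p : Nat.Primes,
      ((p : ℕ) : ℝ) ^ s / (((p : ℕ) : ℝ) ^ s - 1) * logWeight s t (p : ℕ) := by
  simp only [S, logWeight, mul_assoc]

section PrimeWeights

variable {s : ℝ} (hs : 1 ≤ s)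
include hs

lemma two_le_rpow_prime (p : Nat.Primes) : 2 ≤ ((p : ℕ) : ℝ) ^ s := by
  have hp : (2 : ℝ) ≤ (p : ℕ) := by exact_mod_cast p.2.two_le
  exact hp.trans (self_le_rpow_of_one_le (by linarith) hs)

lemma logWeight_prime_nonneg (t : ℝ) (p : Nat.Primes) : 0 ≤ logWeight s t (p : ℕ) := by
  have hps := two_le_rpow_prime hs p
  have hpt : 0 < ((p : ℕ) : ℝ) ^ t := rpow_pos_of_pos (by exact_mod_cast p.2.pos) t
  exact mul_nonneg (div_nonneg hpt.le (by linarith)) (log_nonneg (by exact_mod_cast p.2.one_le))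

lemma T_nonneg (t : ℝ) : 0 ≤ T s t :=
  tsum_nonneg (logWeight_prime_nonneg hs t)

lemma S_le_two_mul_T (t : ℝ) : S s t ≤ 2 * T s t := by
  rw [S_eq_tsum_mul_logWeight, T_eq_tsum_logWeight]
  refine tsum_le_mul_tsum_of_le_of_le (logWeight_prime_nonneg hs t) (fun p => ?_) (fun p => ?_)
  all_goals
    have hps := two_le_rpow_prime hs p
    have hw := logWeight_prime_nonneg hs t p
  · exact le_mul_of_one_le_left hw (one_le_div_sub_one (by linarith))
  · exact mul_le_mul_of_nonneg_right (div_sub_one_le_two hps) hw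

end PrimeWeights

lemma lt_two_mul_of_mul_lt_mul {T S K L : ℝ} (hT : 0 ≤ T) (hST : S ≤ 2 * T) (hL : 0 ≤ L)
    (h : T * K < S * L) : K < 2 * L := by
  nlinarith [mul_le_mul_of_nonneg_right hST hL]

lemma rad_pos (n : ℕ) : 0 < rad n :=
  Finset.prod_pos fun _ hp => (Nat.prime_of_mem_primeFactors hp).pos

lemma rad_le_rad_of_dvd {m n : ℕ} (hmn : m ∣ n) (hn : n ≠ 0) : rad m ≤ rad n :=
  Finset.prod_le_prod_of_subset_of_one_le' (Nat.primeFactors_mono hmn hn)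
    fun _ hp _ => (Nat.prime_of_mem_primeFactors hp).one_lt.le

lemma lt_rad_sq_of_log_lt {n : ℕ} (h : log n < 2 * log (rad n)) : n < rad n ^ 2 := by
  rcases Nat.eq_zero_or_pos n with rfl | hn
  · exact pow_pos (rad_pos 0) 2
  have hR : (0 : ℝ) < (rad n : ℝ) ^ 2 := by exact_mod_cast pow_pos (rad_pos n) 2
  have h' : log n < log ((rad n : ℝ) ^ 2) := by rwa [log_pow, Nat.cast_ofNat]
  exact_mod_cast (log_lt_log_iff (by exact_mod_cast hn) hR).mp h'

theorem stmt_11_general (s t : ℝ) (ht : 0 < t) (hs : 1 + t < s)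
    (a b c : ℕ) (ha : 0 < a) (hb : 0 < b)
    (hc : c = a + b)
    (hbomb : T s t * Real.log (c : ℝ) < S s t * Real.log (rad c : ℝ)) :
    a + b < rad (a * b * c) ^ 2 := by
  have hs1 : 1 ≤ s := by linarith
  have hlog : log c < 2 * log (rad c) :=
    lt_two_mul_of_mul_lt_mul (T_nonneg hs1 t) (S_le_two_mul_T hs1 t)
      (log_nonneg (by exact_mod_cast rad_pos c)) hbomb
  calc a + b = c := hc.symm
    _ < rad c ^ 2 := lt_rad_sq_of_log_lt hlog
    _ ≤ rad (a * b * c) ^ 2 :=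
      Nat.pow_le_pow_left (rad_le_rad_of_dvd (dvd_mul_left c (a * b)) (by subst hc; positivity)) 2

theorem stmt_11 (s t : ℝ) (ht : 0 < t) (hs : 1 + t < s)
    (a b c : ℕ) (ha : 0 < a) (hb : 0 < b) (hab : Nat.Coprime a b)
    (hc : c = a + b)
    (hbomb : T s t * Real.log (c : ℝ) < S s t * Real.log (rad c : ℝ)) :
    a + b < rad (a * b * c) ^ 2 :=
  stmt_11_general s t ht hs a b c ha hb hc hbomb
end
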